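/- For any n ≥ 100, m = ⌈√n⌉, and any real s ≥ 2: under μ_n^m, Pr[n₁ ≤ s] ≤ e²·s/√n. -/

import Mathlib

open Finset

/-- Pivot list: p₀ = 1, then the sorted pivots, then p_m = n+1. -/
def pivotList (n : ℕ) (P : Finset ℕ) : List ℕ :=
  1 :: (P.sort (· ≤ ·)) ++ [n + 1]

/-- The i-th gap (bucket size) nᵢ = pᵢ − pᵢ₋₁, for i = 1,…,m. -/
def gap (n : ℕ) (P : Finset ℕ) (i : ℕ) : ℕ :=
  (pivotList n P).getD i 0 - (pivotList n P).getD (i - 1) 0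

/-- Sample space of μ_n^m : all (m−1)-element subsets of {2,…,n}. -/
def pivotSets (n m : ℕ) : Finset (Finset ℕ) :=
  (Finset.Icc 2 n).powersetCard (m - 1)

/-!
Writing `P` for the set of interior pivots, `n₁ = min P - 1`. Removing the minimum maps the
pivot sets with `n₁ ≤ t` injectively into `{2, …, t + 1} × {(m-2)-subsets of {2, …, n}}`, so
`Pr[n₁ ≤ s] ≤ s · C(n-1, m-2) / C(n-1, m-1) = s (m-1) / (n-m+1)`, and since `m - 1 < √n` the
last ratio is at most `√n / (n - √n) ≤ e² / √n`.
-/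

theorem gap_one_eq_min'_sub_one (n : ℕ) {P : Finset ℕ} (hP : P.Nonempty) :
    gap n P 1 = P.min' hP - 1 := by
  have hlen : 0 < (P.sort (· ≤ ·)).length := by
    rw [Finset.length_sort]
    exact hP.card_pos
  have hfirst : (pivotList n P).getD 1 0 = P.min' hP := by
    rw [pivotList, List.cons_append, List.getD_cons_succ, List.getD_append _ _ _ _ hlen,
      List.getD_eq_getElem _ _ hlen]
    exact Finset.sorted_zero_eq_min'
  rw [gap, hfirst]
  rfl

theorem isLeast_gap_one_add_one {n m : ℕ} {P : Finset ℕ} (hm : 2 ≤ m)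
    (hP : P ∈ pivotSets n m) : IsLeast (P : Set ℕ) (gap n P 1 + 1) := by
  obtain ⟨hsub, hcard⟩ := Finset.mem_powersetCard.mp hP
  have hne : P.Nonempty := Finset.card_pos.mp (by omega)
  have h2 : 2 ≤ P.min' hne := (Finset.mem_Icc.mp (hsub (P.min'_mem hne))).1
  rw [gap_one_eq_min'_sub_one n hne, Nat.sub_add_cancel (by omega)]
  exact Finset.isLeast_min' P hne

theorem card_pivotSets (n m : ℕ) : #(pivotSets n m) = (n - 1).choose (m - 1) := by
  rw [pivotSets, Finset.card_powersetCard, Nat.card_Icc]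
  rfl

theorem card_filter_gap_one_le {n m : ℕ} (hm : 2 ≤ m) (t : ℕ) :
    #{P ∈ pivotSets n m | gap n P 1 ≤ t} ≤ t * (n - 1).choose (m - 2) := by
  set S := {P ∈ pivotSets n m | gap n P 1 ≤ t}
  let removeMin : Finset ℕ → ℕ × Finset ℕ := fun P => (gap n P 1 + 1, P.erase (gap n P 1 + 1))
  have hmin {P : Finset ℕ} (hP : P ∈ (S : Set (Finset ℕ))) : gap n P 1 + 1 ∈ P :=
    (isLeast_gap_one_add_one hm (Finset.mem_filter.mp hP).1).1
  have hmaps : Set.MapsTo removeMin S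
      (Finset.Icc 2 (t + 1) ×ˢ (Finset.Icc 2 n).powersetCard (m - 2) : Finset _) := by
    intro P hP
    obtain ⟨hsub, hcard⟩ := Finset.mem_powersetCard.mp (Finset.mem_filter.mp hP).1
    have h2 := (Finset.mem_Icc.mp (hsub (hmin hP))).1
    have hgap := (Finset.mem_filter.mp hP).2
    simp only [removeMin, Finset.coe_product, Set.mem_prod, Finset.mem_coe, Finset.mem_Icc,
      Finset.mem_powersetCard, Finset.card_erase_of_mem (hmin hP), hcard]
    exact ⟨⟨h2, by omega⟩, (Finset.erase_subset _ _).trans hsub, by omega⟩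
  have hinj : Set.InjOn removeMin S := by
    intro P hP Q hQ hPQ
    obtain ⟨hfst, hsnd⟩ := Prod.mk.inj hPQ
    rw [← Finset.insert_erase (hmin hP), ← Finset.insert_erase (hmin hQ)]
    exact congrArg₂ insert hfst hsnd
  calc #S ≤ #(Finset.Icc 2 (t + 1) ×ˢ (Finset.Icc 2 n).powersetCard (m - 2)) :=
        Finset.card_le_card_of_injOn removeMin hmaps hinj
    _ = t * (n - 1).choose (m - 2) := by
        rw [Finset.card_product, Finset.card_powersetCard, Nat.card_Icc, Nat.card_Icc]
        rfl

theorem Nat.cast_choose_mul_le_mul_cast_choose_succ {N k : ℕ} {x c : ℝ}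
    (h : x * (k + 1) ≤ c * (N - k : ℕ)) :
    (N.choose k : ℝ) * x ≤ c * N.choose (k + 1) := by
  have hrec : (N.choose (k + 1) : ℝ) * (k + 1) = N.choose k * (N - k : ℕ) := by
    exact_mod_cast Nat.choose_succ_right_eq N k
  refine le_of_mul_le_mul_right ?_ (by positivity : (0 : ℝ) < k + 1)
  calc (N.choose k : ℝ) * x * (k + 1) = N.choose k * (x * (k + 1)) := by ring
    _ ≤ N.choose k * (c * (N - k : ℕ)) := by gcongr
    _ = c * N.choose (k + 1) * (k + 1) := by rw [mul_assoc c, hrec]; ring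

theorem mul_sub_one_le_exp_two_mul {r x : ℝ} (hr : 3 / 2 ≤ r) (hx : x < r + 1) :
    r * (x - 1) ≤ Real.exp 2 * (r ^ 2 - x + 1) := by
  have hexp : 3 ≤ Real.exp 2 := by linarith [Real.add_one_le_exp 2]
  have hpos : 0 ≤ r ^ 2 - x + 1 := by nlinarith
  calc r * (x - 1) ≤ r ^ 2 := by nlinarith
    _ ≤ 3 * (r ^ 2 - x + 1) := by nlinarith
    _ ≤ Real.exp 2 * (r ^ 2 - x + 1) := by gcongr

theorem cast_choose_mul_sqrt_le_exp_two_mul {n m : ℕ} (hn : 3 / 2 ≤ Real.sqrt n)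
    (hm : m = ⌈Real.sqrt n⌉₊) :
    ((n - 1).choose (m - 2) : ℝ) * Real.sqrt n ≤ Real.exp 2 * (n - 1).choose (m - 1) := by
  have hsq : Real.sqrt n ^ 2 = n := Real.sq_sqrt (Nat.cast_nonneg n)
  have hmlt : (m : ℝ) < Real.sqrt n + 1 := hm ▸ Nat.ceil_lt_add_one (Real.sqrt_nonneg _)
  have hm2 : 1 < m := hm ▸ Nat.lt_ceil.mpr (by norm_cast; linarith)
  have hmn : m ≤ n + 1 := by exact_mod_cast (by nlinarith : (m : ℝ) ≤ n + 1)
  obtain ⟨k, rfl⟩ : ∃ k, m = k + 2 := ⟨m - 2, by omega⟩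
  rw [Nat.add_sub_cancel, show k + 2 - 1 = k + 1 by omega]
  apply Nat.cast_choose_mul_le_mul_cast_choose_succ
  have hcast : ((n - 1 - k : ℕ) : ℝ) + ((k + 2 : ℕ) : ℝ) = n + 1 := by
    exact_mod_cast (by omega : n - 1 - k + (k + 2) = n + 1)
  convert mul_sub_one_le_exp_two_mul hn hmlt using 2
  · push_cast; ring
  · linarith

theorem stmt_3 (n : ℕ) (hn : 100 ≤ n) (m : ℕ) (hm : m = ⌈Real.sqrt n⌉₊)
    (s : ℝ) (hs : 2 ≤ s) :
    (((pivotSets n m).filter (fun P => (gap n P 1 : ℝ) ≤ s)).card : ℝ)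
        / (pivotSets n m).card
      ≤ Real.exp 2 * s / Real.sqrt n := by
  have hsqrt : (10 : ℝ) ≤ Real.sqrt n :=
    Real.le_sqrt_of_sq_le (by norm_num; exact_mod_cast hn)
  have hm2 : 1 < m := hm ▸ Nat.lt_ceil.mpr (by norm_cast; linarith)
  have hfilter : (pivotSets n m).filter (fun P => (gap n P 1 : ℝ) ≤ s)
      = {P ∈ pivotSets n m | gap n P 1 ≤ ⌊s⌋₊} := by
    simp only [Nat.le_floor_iff (by linarith : (0 : ℝ) ≤ s)]
  have hcount : (#{P ∈ pivotSets n m | gap n P 1 ≤ ⌊s⌋₊} : ℝ) ≤ s * (n - 1).choose (m - 2) :=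
    calc _ ≤ ((⌊s⌋₊ * (n - 1).choose (m - 2) : ℕ) : ℝ) := by
          exact_mod_cast card_filter_gap_one_le hm2 _
      _ ≤ s * (n - 1).choose (m - 2) := by push_cast; gcongr; exact Nat.floor_le (by linarith)
  have hratio := cast_choose_mul_sqrt_le_exp_two_mul (by linarith) hm
  have hmn : m ≤ n :=
    hm ▸ Nat.ceil_le.mpr (by nlinarith [Real.sq_sqrt (Nat.cast_nonneg (α := ℝ) n)])
  have hpos : (0 : ℝ) < (n - 1).choose (m - 1) := by exact_mod_cast Nat.choose_pos (by omega)
  rw [hfilter, card_pivotSets, div_le_div_iff₀ hpos (by linarith)]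
  calc (#{P ∈ pivotSets n m | gap n P 1 ≤ ⌊s⌋₊} : ℝ) * Real.sqrt n
      ≤ s * (n - 1).choose (m - 2) * Real.sqrt n := by gcongr
    _ ≤ s * (Real.exp 2 * (n - 1).choose (m - 1)) := by rw [mul_assoc]; gcongr
    _ = Real.exp 2 * s * (n - 1).choose (m - 1) := by ring
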